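/- Let P be a set of path axioms, let G = ⟨G₁⟩…⟨Gₙ⟩A → ⟨G⟩A ∈ P, and consider a labeled sequent R, R_{Π_G} u v, R_{⟨G⟩} u v, x:⟨F⟩A, y:A, Γ where R_{Π_G} u v = R_{⟨G₁⟩} u z₁, …, R_{⟨Gₙ⟩} z_{n-1} v. Suppose there is a path π from x to y in the propagation graph of this sequent whose string Π′ satisfies Π′A → ⟨F⟩A ∈ (P ∪ I(P))* (so that a propagation rule of LabPr(P) applies, deleting y:A). Then there is a path σ from x to y in the propagation graph of the sequent R, R_{Π_G} u v, x:⟨F⟩A, y:A, Γ (with R_{⟨G⟩} u v removed) whose string Σ satisfies ΣA → ⟨F⟩A ∈ (P ∪ I(P))*. Consequently, an inference of a propagation rule in LabPr(P) followed by the structural rule (Path) for G can be replaced by the (Path) rule followed by a propagation rule of LabPr(P), deriving the same end sequent R, R_{Π_G} u v, x:⟨F⟩A, Γ. -/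

import Mathlib

set_option autoImplicit false

/-! # Common definitions: tense logics, nested/labeled/display calculi
    (following Ciabattoni, Lyon, Ramanayake, Tiu,
     "Display to Labeled Proofs and Back Again for Tense Logics") -/

/-- Diamonds: `wd` = ◇ (white diamond), `bd` = ◆ (black diamond). -/
inductive Dmd : Type
  | wd
  | bd
deriving DecidableEq, Repr

/-- Tense formulae in negation normal form:
    `A ::= p | p̄ | A ∧ A | A ∨ A | □A | ◇A | ■A | ◆A`. -/
inductive Formula : Type
  | pos : Nat → Formula      -- propositional variable p
  | neg : Nat → Formula      -- negated propositional variable p̄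
  | and : Formula → Formula → Formula
  | or : Formula → Formula → Formula
  | box : Formula → Formula   -- □
  | dia : Formula → Formula   -- ◇
  | bbox : Formula → Formula  -- ■
  | bdia : Formula → Formula  -- ◆
deriving DecidableEq, Repr

/-- The De Morgan dual `Ā` of a formula `A`. -/
def Formula.dual : Formula → Formula
  | .pos p => .neg p
  | .neg p => .pos p
  | .and A B => .or A.dual B.dual
  | .or A B => .and A.dual B.dual
  | .box A => .dia A.dual
  | .dia A => .box A.dual
  | .bbox A => .bdia A.dual
  | .bdia A => .bbox A.dual

/-- `A → B` is defined as `Ā ∨ B`. -/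
def Formula.imp (A B : Formula) : Formula := A.dual.or B

/-- `A ↔ B` is defined as `(A → B) ∧ (B → A)`. -/
def Formula.iffF (A B : Formula) : Formula := (A.imp B).and (B.imp A)

/-- `⟨?⟩A` for a diamond `⟨?⟩ ∈ {◇, ◆}`. -/
def dmdF : Dmd → Formula → Formula
  | .wd, A => .dia A
  | .bd, A => .bdia A

/-- `⟨?⟩₁…⟨?⟩ₘ A` for a string of diamonds. -/
def applyDmds : List Dmd → Formula → Formula
  | [], A => A
  | d :: ds, A => dmdF d (applyDmds ds A)

/-- A general path axiom `ΠA → ΣA`, given by the strings `Π` (ant) and `Σ` (suc). -/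
structure GenPath : Type where
  ant : List Dmd
  suc : List Dmd

/-- A path axiom `ΠA → ⟨?⟩A`. -/
structure PathAx : Type where
  ant : List Dmd
  suc : Dmd
deriving DecidableEq

/-- Every path axiom is a general path axiom. -/
def pathToGen (F : PathAx) : GenPath := ⟨F.ant, [F.suc]⟩

/-- All instances `ΠA → ΣA` of the general path axioms in `GP`. -/
def gpInstances (GP : Set GenPath) : Set Formula :=
  {F | ∃ gp ∈ GP, ∃ A : Formula, F = (applyDmds gp.ant A).imp (applyDmds gp.suc A)}

/-- The Hilbert system `Kt + S`: classical propositional axioms, modus ponens,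
    the tense axioms, and necessitation for □ and ■, plus the axioms in `S`. -/
inductive KtProof (S : Set Formula) : Formula → Prop
  | ax {A : Formula} : A ∈ S → KtProof S A
  | pl1 (A B : Formula) : KtProof S (A.imp (B.imp A))
  | pl2 (A B : Formula) : KtProof S ((B.dual.imp A.dual).imp (A.imp B))
  | pl3 (A B C : Formula) :
      KtProof S ((A.imp (B.imp C)).imp ((A.imp B).imp (A.imp C)))
  | tense1 (A : Formula) : KtProof S (A.imp (Formula.box (Formula.bdia A)))
  | tense2 (A : Formula) : KtProof S (A.imp (Formula.bbox (Formula.dia A)))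
  | kbox (A B : Formula) :
      KtProof S ((Formula.box (A.imp B)).imp ((Formula.box A).imp (Formula.box B)))
  | kbbox (A B : Formula) :
      KtProof S ((Formula.bbox (A.imp B)).imp ((Formula.bbox A).imp (Formula.bbox B)))
  | boxdual (A : Formula) :
      KtProof S ((Formula.box A).iffF (Formula.dia A.dual).dual)
  | bboxdual (A : Formula) :
      KtProof S ((Formula.bbox A).iffF (Formula.bdia A.dual).dual)
  | mp {A B : Formula} : KtProof S (A.imp B) → KtProof S A → KtProof S B
  | necbox {A : Formula} : KtProof S A → KtProof S (Formula.box A)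
  | necbbox {A : Formula} : KtProof S A → KtProof S (Formula.bbox A)

/-! ## Nested sequents -/

/-- Nested sequents: `X ::= ε | A | X, X | ∘{X} | •{X}`. -/
inductive NSeq : Type
  | empty
  | fml : Formula → NSeq
  | comma : NSeq → NSeq → NSeq
  | white : NSeq → NSeq   -- ∘{X}
  | black : NSeq → NSeq   -- •{X}
deriving DecidableEq, Repr

/-- Comma is associative and commutative with unit ε: the induced congruence. -/
inductive NEquiv : NSeq → NSeq → Prop
  | refl (X : NSeq) : NEquiv X X
  | symm {X Y : NSeq} : NEquiv X Y → NEquiv Y X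
  | trans {X Y Z : NSeq} : NEquiv X Y → NEquiv Y Z → NEquiv X Z
  | comm (X Y : NSeq) : NEquiv (X.comma Y) (Y.comma X)
  | assoc (X Y Z : NSeq) : NEquiv ((X.comma Y).comma Z) (X.comma (Y.comma Z))
  | unit (X : NSeq) : NEquiv (X.comma NSeq.empty) X
  | commaCongr {X X' Y Y' : NSeq} :
      NEquiv X X' → NEquiv Y Y' → NEquiv (X.comma Y) (X'.comma Y')
  | whiteCongr {X Y : NSeq} : NEquiv X Y → NEquiv X.white Y.white
  | blackCongr {X Y : NSeq} : NEquiv X Y → NEquiv X.black Y.black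

/-- `★₁{… ★ₙ{Y} …}` where `★ⱼ = ∘` if `⟨?⟩ⱼ = ◇` and `★ⱼ = •` if `⟨?⟩ⱼ = ◆`. -/
def nestDmds : List Dmd → NSeq → NSeq
  | [], Y => Y
  | .wd :: ds, Y => (nestDmds ds Y).white
  | .bd :: ds, Y => (nestDmds ds Y).black

/-- The structural rules `NestSt(GP)` (premise, conclusion): for each
    `ΠA → ΣA ∈ GP`, from `X, ★Σ{Y}` infer `X, ★Π{Y}`. -/
def NestSt (GP : Set GenPath) : NSeq → NSeq → Prop :=
  fun prem concl => ∃ gp ∈ GP, ∃ X Y : NSeq,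
    prem = X.comma (nestDmds gp.suc Y) ∧ concl = X.comma (nestDmds gp.ant Y)

/-- The empty set of extension rules on nested sequents. -/
def NoNest : NSeq → NSeq → Prop := fun _ _ => False

/-- The shallow nested (display) calculus `SKT` extended with the
    structural rules `Ext` (relating premise to conclusion); nested sequents are
    treated up to the congruence `NEquiv` (comma is AC with unit ε). -/
inductive SKT (Ext : NSeq → NSeq → Prop) : NSeq → Prop
  | id (X : NSeq) (p : Nat) :
      SKT Ext ((X.comma (.fml (.pos p))).comma (.fml (.neg p)))
  | orR {X : NSeq} {A B : Formula} :
      SKT Ext (X.comma ((NSeq.fml A).comma (.fml B))) →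
      SKT Ext (X.comma (.fml (.or A B)))
  | andR {X : NSeq} {A B : Formula} :
      SKT Ext (X.comma (.fml A)) → SKT Ext (X.comma (.fml B)) →
      SKT Ext (X.comma (.fml (.and A B)))
  | ctr {X Y : NSeq} : SKT Ext (X.comma (Y.comma Y)) → SKT Ext (X.comma Y)
  | wk {X Y : NSeq} : SKT Ext X → SKT Ext (X.comma Y)
  | rf {X Y : NSeq} : SKT Ext (X.comma Y.white) → SKT Ext (X.black.comma Y)
  | rp {X Y : NSeq} : SKT Ext (X.comma Y.black) → SKT Ext (X.white.comma Y)
  | bbox {X : NSeq} {A : Formula} :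
      SKT Ext (X.comma (NSeq.fml A).black) → SKT Ext (X.comma (.fml (.bbox A)))
  | box {X : NSeq} {A : Formula} :
      SKT Ext (X.comma (NSeq.fml A).white) → SKT Ext (X.comma (.fml (.box A)))
  | bdia {X Y : NSeq} {A : Formula} :
      SKT Ext ((X.comma (Y.comma (.fml A)).black).comma (.fml (.bdia A))) →
      SKT Ext ((X.comma Y.black).comma (.fml (.bdia A)))
  | dia {X Y : NSeq} {A : Formula} :
      SKT Ext ((X.comma (Y.comma (.fml A)).white).comma (.fml (.dia A))) →
      SKT Ext ((X.comma Y.white).comma (.fml (.dia A)))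
  | ext {X Y : NSeq} : Ext X Y → SKT Ext X → SKT Ext Y
  | equiv {X Y : NSeq} : SKT Ext X → NEquiv X Y → SKT Ext Y

/-! ## Deep nested calculus -/

/-- One-hole contexts over nested sequents (up to `NEquiv` this suffices). -/
inductive Ctx : Type
  | hole
  | commaL : Ctx → NSeq → Ctx
  | white : Ctx → Ctx
  | black : Ctx → Ctx

/-- Filling the hole of a context with a nested sequent. -/
def Ctx.fill : Ctx → NSeq → NSeq
  | .hole, X => X
  | .commaL C Y, X => (C.fill X).comma Y
  | .white C, X => (C.fill X).white
  | .black C, X => (C.fill X).black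

/-- The deep nested calculus `DKT` extended with rules `Ext`
    (premise, conclusion); sequents are treated up to `NEquiv`. -/
inductive DKT (Ext : NSeq → NSeq → Prop) : NSeq → Prop
  | id (C : Ctx) (p : Nat) :
      DKT Ext (C.fill ((NSeq.fml (.pos p)).comma (.fml (.neg p))))
  | andD {C : Ctx} {Y : NSeq} {A B : Formula} :
      DKT Ext (C.fill ((NSeq.fml A).comma Y)) →
      DKT Ext (C.fill ((NSeq.fml B).comma Y)) →
      DKT Ext (C.fill ((NSeq.fml (.and A B)).comma Y))
  | orD {C : Ctx} {Y : NSeq} {A B : Formula} :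
      DKT Ext (C.fill ((NSeq.fml A).comma ((NSeq.fml B).comma Y))) →
      DKT Ext (C.fill ((NSeq.fml (.or A B)).comma Y))
  | bboxD {C : Ctx} {A : Formula} :
      DKT Ext (C.fill ((NSeq.fml (.bbox A)).comma (NSeq.fml A).black)) →
      DKT Ext (C.fill (.fml (.bbox A)))
  | boxD {C : Ctx} {A : Formula} :
      DKT Ext (C.fill ((NSeq.fml (.box A)).comma (NSeq.fml A).white)) →
      DKT Ext (C.fill (.fml (.box A)))
  | bdia1 {C : Ctx} {Y : NSeq} {A : Formula} :
      DKT Ext (C.fill ((Y.comma (.fml A)).black.comma (.fml (.bdia A)))) →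
      DKT Ext (C.fill (Y.black.comma (.fml (.bdia A))))
  | bdia2 {C : Ctx} {Y : NSeq} {A : Formula} :
      DKT Ext (C.fill ((Y.comma (.fml (.bdia A))).white.comma (.fml A))) →
      DKT Ext (C.fill ((Y.comma (.fml (.bdia A))).white))
  | dia1 {C : Ctx} {Y : NSeq} {A : Formula} :
      DKT Ext (C.fill ((Y.comma (.fml A)).white.comma (.fml (.dia A)))) →
      DKT Ext (C.fill (Y.white.comma (.fml (.dia A))))
  | dia2 {C : Ctx} {Y : NSeq} {A : Formula} :
      DKT Ext (C.fill ((Y.comma (.fml (.dia A))).black.comma (.fml A))) →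
      DKT Ext (C.fill ((Y.comma (.fml (.dia A))).black))
  | ext {X Y : NSeq} : Ext X Y → DKT Ext X → DKT Ext Y
  | equiv {X Y : NSeq} : DKT Ext X → NEquiv X Y → DKT Ext Y

/-! ## Display rules and display equivalence -/

/-- `DisplayDeriv X Z`: `Z` is derivable from `X` using only the display rules
    (rf) and (rp) (and rearrangement by the comma-congruence `NEquiv`). -/
inductive DisplayDeriv : NSeq → NSeq → Prop
  | refl (X : NSeq) : DisplayDeriv X X
  | equiv {X Y Z : NSeq} : NEquiv X Y → DisplayDeriv Y Z → DisplayDeriv X Z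
  | rf {X Y Z : NSeq} :
      DisplayDeriv (X.black.comma Y) Z → DisplayDeriv (X.comma Y.white) Z
  | rp {X Y Z : NSeq} :
      DisplayDeriv (X.white.comma Y) Z → DisplayDeriv (X.comma Y.black) Z

/-- Two nested sequents are display equivalent when each is derivable from the
    other using only the display rules. -/
def DisplayEquiv (X Y : NSeq) : Prop := DisplayDeriv X Y ∧ DisplayDeriv Y X

/-! ## Labeled sequents and the labeled calculus G3Kt -/

abbrev Label : Type := Nat

/-- A set of relational atoms `Rxy`. -/
abbrev RelSet : Type := Finset (Label × Label)

/-- A labeled sequent `R, Γ`. -/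
abbrev LSeq : Type := RelSet × Multiset (Label × Formula)

/-- The label `z` occurs in the labeled sequent `S`. -/
def occursLS (z : Label) (S : LSeq) : Prop :=
  (∃ w, (z, w) ∈ S.1 ∨ (w, z) ∈ S.1) ∨ ∃ A, (z, A) ∈ S.2

/-- `R_◇ x y := Rxy` and `R_◆ x y := Ryx`. -/
def relAtom : Dmd → Label → Label → Label × Label
  | .wd, x, y => (x, y)
  | .bd, x, y => (y, x)

/-- Relational atoms of a `Π`-chain through the list of labels `ls`. -/
def chainAtoms : List Dmd → List Label → List (Label × Label)
  | d :: ds, a :: b :: rest => relAtom d a b :: chainAtoms ds (b :: rest)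
  | _, _ => []

/-- `ls` is a chain of labels for the diamond string `ds` from `x` to `y`
    (an empty string forces `x = y`). -/
def IsChainList (ds : List Dmd) (x y : Label) (ls : List Label) : Prop :=
  ls.length = ds.length + 1 ∧ ls.head? = some x ∧ ls.getLast? = some y

/-- The structural rules `LabSt(GP)` (premise, conclusion): for `ΠA → ΣA ∈ GP`,
    from `R, R_Π x y, R_Σ x y, Γ` infer `R, R_Π x y, Γ`, where all labels in
    `R_Σ x y` other than `x, y` are eigenvariables. -/
def LabSt (GP : Set GenPath) : LSeq → LSeq → Prop :=
  fun prem concl => ∃ gp ∈ GP,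
    ∃ (R : RelSet) (Γ : Multiset (Label × Formula)) (x y : Label)
      (als sls : List Label),
      IsChainList gp.ant x y als ∧ IsChainList gp.suc x y sls ∧
      concl = (R ∪ (chainAtoms gp.ant als).toFinset, Γ) ∧
      prem = (R ∪ (chainAtoms gp.ant als).toFinset ∪
                (chainAtoms gp.suc sls).toFinset, Γ) ∧
      (∀ z ∈ sls, z ≠ x → z ≠ y → ¬ occursLS z concl)

/-- The empty set of extension rules on labeled sequents. -/
def NoExt : LSeq → LSeq → Prop := fun _ _ => False

/-- Derivations in the labeled calculus `G3Kt` extended with rules `Ext`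
    (relating premise to conclusion). -/
inductive G3KtD (Ext : LSeq → LSeq → Prop) :
    RelSet → Multiset (Label × Formula) → Type
  | id (R : RelSet) (Γ : Multiset (Label × Formula)) (x : Label) (p : Nat) :
      G3KtD Ext R ((x, .pos p) ::ₘ (x, .neg p) ::ₘ Γ)
  | orR (R : RelSet) (Γ : Multiset (Label × Formula)) (x : Label) (A B : Formula)
      (D : G3KtD Ext R ((x, A) ::ₘ (x, B) ::ₘ Γ)) :
      G3KtD Ext R ((x, .or A B) ::ₘ Γ)
  | andR (R : RelSet) (Γ : Multiset (Label × Formula)) (x : Label) (A B : Formula)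
      (D1 : G3KtD Ext R ((x, A) ::ₘ Γ)) (D2 : G3KtD Ext R ((x, B) ::ₘ Γ)) :
      G3KtD Ext R ((x, .and A B) ::ₘ Γ)
  | boxR (R : RelSet) (Γ : Multiset (Label × Formula)) (x y : Label) (A : Formula)
      (hy : ¬ occursLS y (R, (x, Formula.box A) ::ₘ Γ))
      (D : G3KtD Ext (insert (x, y) R) ((y, A) ::ₘ Γ)) :
      G3KtD Ext R ((x, .box A) ::ₘ Γ)
  | diaR (R : RelSet) (Γ : Multiset (Label × Formula)) (x y : Label) (A : Formula)
      (h : (x, y) ∈ R)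
      (D : G3KtD Ext R ((y, A) ::ₘ (x, Formula.dia A) ::ₘ Γ)) :
      G3KtD Ext R ((x, .dia A) ::ₘ Γ)
  | bboxR (R : RelSet) (Γ : Multiset (Label × Formula)) (x y : Label) (A : Formula)
      (hy : ¬ occursLS y (R, (x, Formula.bbox A) ::ₘ Γ))
      (D : G3KtD Ext (insert (y, x) R) ((y, A) ::ₘ Γ)) :
      G3KtD Ext R ((x, .bbox A) ::ₘ Γ)
  | bdiaR (R : RelSet) (Γ : Multiset (Label × Formula)) (x y : Label) (A : Formula)
      (h : (y, x) ∈ R)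
      (D : G3KtD Ext R ((y, A) ::ₘ (x, Formula.bdia A) ::ₘ Γ)) :
      G3KtD Ext R ((x, .bdia A) ::ₘ Γ)
  | ext (R' : RelSet) (Γ' : Multiset (Label × Formula))
      (R : RelSet) (Γ : Multiset (Label × Formula))
      (h : Ext (R', Γ') (R, Γ)) (D : G3KtD Ext R' Γ') : G3KtD Ext R Γ

/-- Derivability in `G3Kt + Ext`. -/
def G3KtDeriv (Ext : LSeq → LSeq → Prop) (R : RelSet)
    (Γ : Multiset (Label × Formula)) : Prop :=
  Nonempty (G3KtD Ext R Γ)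

/-- `Q` holds of every labeled sequent occurring in the derivation `D`
    (including the end sequent). -/
def G3KtD.allSeq {Ext : LSeq → LSeq → Prop} (Q : LSeq → Prop) :
    ∀ {R : RelSet} {Γ : Multiset (Label × Formula)}, G3KtD Ext R Γ → Prop
  | _, _, .id R Γ x p => Q (R, (x, .pos p) ::ₘ (x, .neg p) ::ₘ Γ)
  | _, _, .orR R Γ x A B D => Q (R, (x, .or A B) ::ₘ Γ) ∧ D.allSeq Q
  | _, _, .andR R Γ x A B D1 D2 =>
      Q (R, (x, .and A B) ::ₘ Γ) ∧ D1.allSeq Q ∧ D2.allSeq Q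
  | _, _, .boxR R Γ x _ A _ D => Q (R, (x, .box A) ::ₘ Γ) ∧ D.allSeq Q
  | _, _, .diaR R Γ x _ A _ D => Q (R, (x, .dia A) ::ₘ Γ) ∧ D.allSeq Q
  | _, _, .bboxR R Γ x _ A _ D => Q (R, (x, .bbox A) ::ₘ Γ) ∧ D.allSeq Q
  | _, _, .bdiaR R Γ x _ A _ D => Q (R, (x, .bdia A) ::ₘ Γ) ∧ D.allSeq Q
  | _, _, .ext _ _ R Γ _ D => Q (R, Γ) ∧ D.allSeq Q

/-! ## Paths, inverses, compositions, completion, propagation rules -/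

/-- The inverse of a diamond: `◇⁻¹ = ◆` and `◆⁻¹ = ◇`. -/
def Dmd.inv : Dmd → Dmd
  | .wd => .bd
  | .bd => .wd

/-- The inverse `I(F)` of a path axiom `F`. -/
def PathAx.inv (F : PathAx) : PathAx := ⟨(F.ant.map Dmd.inv).reverse, F.suc.inv⟩

/-- `I(P)`, the set of inverses of the path axioms in `P`. -/
def invSet (P : Set PathAx) : Set PathAx := {F | ∃ G ∈ P, F = G.inv}

/-- The completion `P*`: the smallest set of path axioms containing `P`,
    containing `◇A → ◇A` and `◆A → ◆A`, and closed under compositions. -/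
inductive Completion (P : Set PathAx) : PathAx → Prop
  | base {F : PathAx} : F ∈ P → Completion P F
  | wrefl : Completion P ⟨[Dmd.wd], Dmd.wd⟩
  | brefl : Completion P ⟨[Dmd.bd], Dmd.bd⟩
  | comp {F G : PathAx} (i : Nat) (hi : i < G.ant.length) :
      Completion P F → Completion P G → G.ant.get ⟨i, hi⟩ = F.suc →
      Completion P ⟨G.ant.take i ++ F.ant ++ G.ant.drop (i + 1), G.suc⟩

/-- `(P ∪ I(P))*`. -/
def PStar (P : Set PathAx) : PathAx → Prop := Completion (P ∪ invSet P)

/-- A path from `x` to `y` with the given string of diamonds in the propagation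
    graph determined by the edge set `E`: each `Rxy` contributes the labeled
    edges `(x, y, ◇)` and `(y, x, ◆)`. -/
inductive LPath (E : Finset (Label × Label)) : Label → Label → List Dmd → Prop
  | nil (x : Label) : LPath E x x []
  | fwd {x z y : Label} {ds : List Dmd} :
      (x, z) ∈ E → LPath E z y ds → LPath E x y (Dmd.wd :: ds)
  | bwd {x z y : Label} {ds : List Dmd} :
      (z, x) ∈ E → LPath E z y ds → LPath E x y (Dmd.bd :: ds)

/-- The labeled propagation rules `LabPr(P)` (premise, conclusion):
    from `R, x:⟨?⟩A, y:A, Γ` infer `R, x:⟨?⟩A, Γ`, provided there is a path `π`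
    from `x` to `y` in the propagation graph of the premise whose string `Π`
    satisfies `ΠA → ⟨?⟩A ∈ (P ∪ I(P))*`. -/
def LabPr (P : Set PathAx) : LSeq → LSeq → Prop :=
  fun prem concl =>
    ∃ (R : RelSet) (Γ : Multiset (Label × Formula)) (x y : Label)
      (A : Formula) (d : Dmd) (Pi : List Dmd),
      prem = (R, (x, dmdF d A) ::ₘ (y, A) ::ₘ Γ) ∧
      concl = (R, (x, dmdF d A) ::ₘ Γ) ∧
      LPath R x y Pi ∧ PStar P ⟨Pi, d⟩

/-! ## Labeled graphs, labeled polytrees, and the translations 𝔏 and 𝔑 -/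

/-- A labeled graph `(V, E, L)`: vertices decorated with multisets of formulae. -/
structure LGraph : Type where
  V : Finset Label
  E : Finset (Label × Label)
  L : Label → Multiset Formula

/-- Union of labeled graphs (multiset union of labels at shared vertices). -/
def LGraph.union (G H : LGraph) : LGraph :=
  ⟨G.V ∪ H.V, G.E ∪ H.E, fun z => G.L z + H.L z⟩

/-- Isomorphism of labeled graphs: a bijection between the vertex sets
    preserving edges and vertex labels. -/
def LGraph.Iso (G H : LGraph) : Prop :=
  ∃ f : Label → Label, Set.BijOn f ↑G.V ↑H.V ∧
    (∀ u ∈ G.V, ∀ v ∈ G.V, ((u, v) ∈ G.E ↔ (f u, f v) ∈ H.E)) ∧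
    (∀ v ∈ G.V, G.L v = H.L (f v))

/-- A labeled graph is a labeled polytree when its underlying undirected
    graph is a tree. -/
def LGraph.IsPolytree (G : LGraph) : Prop :=
  (∀ x y : Label, (x, y) ∈ G.E → (y, x) ∉ G.E) ∧
  (∀ e ∈ G.E, e.1 ∈ G.V ∧ e.2 ∈ G.V) ∧
  ((SimpleGraph.fromRel fun a b => (a, b) ∈ G.E).induce (↑G.V : Set Label)).IsTree

/-- The translation `𝔏ₓ` from nested sequents to labeled graphs (relational,
    since fresh vertices may be chosen arbitrarily): `LabT x X G` states that
    `G` is a labeled graph obtained by translating `X` starting at vertex `x`. -/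
inductive LabT : Label → NSeq → LGraph → Prop
  | empty (x : Label) : LabT x .empty ⟨∅, ∅, fun _ => 0⟩
  | fml (x : Label) (A : Formula) :
      LabT x (.fml A) ⟨{x}, ∅, fun z => if z = x then {A} else 0⟩
  | comma {x : Label} {X Y : NSeq} {G H : LGraph} :
      LabT x X G → LabT x Y H → G.V ∩ H.V ⊆ {x} →
      LabT x (X.comma Y) (G.union H)
  | white {x y : Label} {X : NSeq} {G : LGraph} :
      LabT y X G → x ∉ G.V → x ≠ y →
      LabT x X.white ⟨insert x (insert y G.V), insert (x, y) G.E, G.L⟩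
  | black {x y : Label} {X : NSeq} {G : LGraph} :
      LabT y X G → x ∉ G.V → x ≠ y →
      LabT x X.black ⟨insert x (insert y G.V), insert (y, x) G.E, G.L⟩

/-- The translation `𝔑ₓ` from labeled polytrees (rooted at a chosen vertex `x`)
    to nested sequents: the inverse of the translation `𝔏ₓ`. -/
def NTrans (x : Label) (G : LGraph) (X : NSeq) : Prop := LabT x X G

/-- The labeled graph of a labeled sequent `R, Γ`: vertices are the occurring
    labels, edges are given by `R`, and each vertex `x` is labeled by the
    multiset `{A | x:A ∈ Γ}`. -/
def toLGraph (R : RelSet) (Γ : Multiset (Label × Formula)) : LGraph where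
  V := R.image Prod.fst ∪ R.image Prod.snd ∪ (Γ.map Prod.fst).toFinset
  E := R
  L := fun z => (Γ.filter fun p => p.1 = z).map Prod.snd

/-- The multiset of labeled formulae of a labeled graph, read as a sequent. -/
def LGraph.toSeqGamma (G : LGraph) : Multiset (Label × Formula) :=
  G.V.val.bind fun v => (G.L v).map fun A => (v, A)

/-- The set of labels occurring in a labeled sequent. -/
def seqLabels (R : RelSet) (Γ : Multiset (Label × Formula)) : Set Label :=
  {z | (∃ w, (z, w) ∈ R ∨ (w, z) ∈ R) ∨ ∃ A, (z, A) ∈ Γ}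

/-- `R, Γ` is a labeled polytree sequent: its underlying undirected graph
    (on the occurring labels) is a tree. -/
def IsPolytreeSeq (R : RelSet) (Γ : Multiset (Label × Formula)) : Prop :=
  (∀ x y : Label, (x, y) ∈ R → (y, x) ∉ R) ∧
  ((SimpleGraph.fromRel fun a b => (a, b) ∈ R).induce (seqLabels R Γ)).IsTree

/-- The labeled edges `(u, v, ◇)` and `(v, u, ◆)` of the propagation graph
    determined by an edge set. -/
def propEdges (E : Finset (Label × Label)) : Set (Label × Label × Dmd) :=
  {e | ∃ u v : Label, (u, v) ∈ E ∧ (e = (u, v, Dmd.wd) ∨ e = (v, u, Dmd.bd))}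

/-- The deep propagation rules `DeepPr(P)` (premise, conclusion), expressed via
    the labeled polytree representation of nested sequents: from
    `X[⟨?⟩A]ᵢ[A]ⱼ` infer `X[⟨?⟩A]ᵢ[∅]ⱼ`, provided there is a path from node `i`
    (= `u`) to node `j` (= `v`) in the propagation graph of the premise whose
    string `Π` satisfies `ΠA → ⟨?⟩A ∈ (P ∪ I(P))*`. -/
def DeepPrL (P : Set PathAx) : NSeq → NSeq → Prop :=
  fun prem concl =>
    ∃ (r : Label) (G : LGraph) (u v : Label) (A : Formula) (d : Dmd)
      (Pi : List Dmd),
      LabT r prem G ∧ LPath G.E u v Pi ∧ PStar P ⟨Pi, d⟩ ∧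
      dmdF d A ∈ G.L u ∧ A ∈ G.L v ∧
      LabT r concl ⟨G.V, G.E, fun z => if z = v then (G.L v).erase A else G.L z⟩

/-- Substitution of the label `y` by the label `x`. -/
def subLabel (x y z : Label) : Label := if z = y then x else z

section Aux

theorem LPath.mono {E E' : Finset (Label × Label)} (h : E ⊆ E') :
    ∀ {x y : Label} {ds : List Dmd}, LPath E x y ds → LPath E' x y ds := by
  intro x y ds hp
  induction hp with
  | nil => exact .nil _
  | fwd he _ ih => exact .fwd (h he) ih
  | bwd he _ ih => exact .bwd (h he) ih

theorem LPath.append {E : Finset (Label × Label)} :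
    ∀ {a b c : Label} {l1 l2 : List Dmd},
    LPath E a b l1 → LPath E b c l2 → LPath E a c (l1 ++ l2) := by
  intro a b c l1 l2 h1
  induction h1 with
  | nil => exact fun h => h
  | fwd he _ ih => exact fun h2 => .fwd he (ih h2)
  | bwd he _ ih => exact fun h2 => .bwd he (ih h2)

theorem LPath.rev {E : Finset (Label × Label)} :
    ∀ {a b : Label} {ds : List Dmd},
    LPath E a b ds → LPath E b a ((ds.map Dmd.inv).reverse) := by
  intro a b ds hp
  induction hp with
  | nil => exact .nil _
  | @fwd x z y ds he _ ih =>
      have hstep : LPath E z x [Dmd.wd.inv] := .bwd he (.nil _)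
      simpa using ih.append hstep
  | @bwd x z y ds he _ ih =>
      have hstep : LPath E z x [Dmd.bd.inv] := .fwd he (.nil _)
      simpa using ih.append hstep

theorem chain_lpath {E : Finset (Label × Label)} :
    ∀ (ds : List Dmd) (ls : List Label) (u v : Label),
    ls.length = ds.length + 1 → ls.head? = some u → ls.getLast? = some v →
    (∀ p ∈ chainAtoms ds ls, p ∈ E) → LPath E u v ds := by
  intro ds
  induction ds with
  | nil =>
    intro ls u v hlen hh hl _
    match ls, hlen with
    | [a], _ =>
      simp at hh hl
      subst hh; subst hl
      exact .nil _
  | cons d ds ih =>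
    intro ls u v hlen hh hl hmem
    match ls, hlen with
    | a :: b :: rest, hlen =>
      simp at hh
      subst hh
      have hmem0 : relAtom d a b ∈ E := hmem _ (by simp [chainAtoms])
      have hrest : LPath E b v ds := by
        refine ih (b :: rest) b v ?_ rfl ?_ ?_
        · simpa using hlen
        · simpa [List.getLast?_cons_cons] using hl
        · intro p hp
          exact hmem p (by simp [chainAtoms, hp])
      cases d with
      | wd => exact .fwd (by simpa [relAtom] using hmem0) hrest
      | bd => exact .bwd (by simpa [relAtom] using hmem0) hrest

/-- `Repl ant s ds ds'`: `ds'` is obtained from `ds` by replacing some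
    occurrences of `s` by `ant` and some occurrences of `s.inv` by the
    inverted reversal of `ant`. -/
inductive Repl (ant : List Dmd) (s : Dmd) : List Dmd → List Dmd → Prop
  | nil : Repl ant s [] []
  | keep {t t' : List Dmd} (d : Dmd) : Repl ant s t t' → Repl ant s (d :: t) (d :: t')
  | rfwd {t t' : List Dmd} : Repl ant s t t' → Repl ant s (s :: t) (ant ++ t')
  | rbwd {t t' : List Dmd} : Repl ant s t t' →
      Repl ant s (s.inv :: t) ((ant.map Dmd.inv).reverse ++ t')

theorem path_replace {E : Finset (Label × Label)} {u v : Label} {s : Dmd}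
    {ant : List Dmd} (hant : LPath E u v ant) :
    ∀ {x y : Label} {ds : List Dmd},
    LPath (E ∪ {relAtom s u v}) x y ds →
    ∃ ds', Repl ant s ds ds' ∧ LPath E x y ds' := by
  have hrev : LPath E v u ((ant.map Dmd.inv).reverse) := hant.rev
  intro x y ds hp
  induction hp with
  | nil => exact ⟨[], .nil, .nil _⟩
  | @fwd x z y ds he _ ih =>
    obtain ⟨t', hr, hp'⟩ := ih
    rcases Finset.mem_union.mp he with he | he
    · exact ⟨.wd :: t', .keep _ hr, .fwd he hp'⟩
    · have he' : (x, z) = relAtom s u v := Finset.mem_singleton.mp he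
      cases s with
      | wd =>
        simp [relAtom, Prod.ext_iff] at he'
        obtain ⟨rfl, rfl⟩ := he'
        exact ⟨ant ++ t', .rfwd hr, hant.append hp'⟩
      | bd =>
        simp [relAtom, Prod.ext_iff] at he'
        obtain ⟨rfl, rfl⟩ := he'
        exact ⟨(ant.map Dmd.inv).reverse ++ t',
          Repl.rbwd (s := Dmd.bd) hr, hrev.append hp'⟩
  | @bwd x z y ds he _ ih =>
    obtain ⟨t', hr, hp'⟩ := ih
    rcases Finset.mem_union.mp he with he | he
    · exact ⟨.bd :: t', .keep _ hr, .bwd he hp'⟩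
    · have he' : (z, x) = relAtom s u v := Finset.mem_singleton.mp he
      cases s with
      | wd =>
        simp [relAtom, Prod.ext_iff] at he'
        obtain ⟨rfl, rfl⟩ := he'
        exact ⟨(ant.map Dmd.inv).reverse ++ t',
          Repl.rbwd (s := Dmd.wd) hr, hrev.append hp'⟩
      | bd =>
        simp [relAtom, Prod.ext_iff] at he'
        obtain ⟨rfl, rfl⟩ := he'
        exact ⟨ant ++ t', .rfwd hr, hant.append hp'⟩

theorem take_drop_mid (pre t : List Dmd) (a : Dmd) :
    (pre ++ a :: t).take pre.length = pre ∧
    (pre ++ a :: t).drop (pre.length + 1) = t ∧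
    ∀ h, (pre ++ a :: t).get ⟨pre.length, h⟩ = a := by
  induction pre with
  | nil => simp
  | cons b pre ih =>
    refine ⟨by simp [ih.1], by simpa using ih.2.1, ?_⟩
    intro h
    simpa using ih.2.2 (by simpa using Nat.lt_of_succ_lt_succ h)

theorem repl_pstar {P : Set PathAx} {Gax : PathAx} (hG : Gax ∈ P) :
    ∀ {ds ds' : List Dmd}, Repl Gax.ant Gax.suc ds ds' →
    ∀ (pre : List Dmd) (f : Dmd),
      PStar P ⟨pre ++ ds, f⟩ → PStar P ⟨pre ++ ds', f⟩ := by
  intro ds ds' hr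
  induction hr with
  | nil => exact fun _ _ h => h
  | keep d _ ih =>
    intro pre f h
    have := ih (pre ++ [d]) f (by simpa using h)
    simpa using this
  | @rfwd t t' _ ih =>
    intro pre f h
    have h1 : PStar P ⟨pre ++ Gax.suc :: t', f⟩ := by
      have := ih (pre ++ [Gax.suc]) f (by simpa using h)
      simpa using this
    have hlen : pre.length < (pre ++ Gax.suc :: t').length := by simp
    have hcomp := Completion.comp (F := Gax) (G := ⟨pre ++ Gax.suc :: t', f⟩)
      pre.length hlen (Completion.base (Or.inl hG)) h1
      ((take_drop_mid pre t' Gax.suc).2.2 hlen)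
    obtain ⟨h2, h3, _⟩ := take_drop_mid pre t' Gax.suc
    simpa [PStar, h2, h3, List.append_assoc] using hcomp
  | @rbwd t t' _ ih =>
    intro pre f h
    have h1 : PStar P ⟨pre ++ Gax.suc.inv :: t', f⟩ := by
      have := ih (pre ++ [Gax.suc.inv]) f (by simpa using h)
      simpa using this
    have hGinv : Gax.inv ∈ P ∪ invSet P := Or.inr ⟨Gax, hG, rfl⟩
    have hlen : pre.length < (pre ++ Gax.suc.inv :: t').length := by simp
    have hcomp := Completion.comp (F := Gax.inv)
      (G := ⟨pre ++ Gax.suc.inv :: t', f⟩)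
      pre.length hlen (Completion.base hGinv) h1
      ((take_drop_mid pre t' Gax.suc.inv).2.2 hlen)
    obtain ⟨h2, h3, _⟩ := take_drop_mid pre t' Gax.suc.inv
    simpa [PStar, PathAx.inv, h2, h3, List.append_assoc] using hcomp

end Aux

/-- Lemma `Permute_Prop_and_Struc`: let `P` be a set of path
    axioms and `G = ⟨G₁⟩…⟨Gₙ⟩A → ⟨G⟩A ∈ P`. Consider the labeled sequent
    `R, R_{Π_G} u v, R_{⟨G⟩} u v, x:⟨F⟩A, y:A, Γ` and suppose there is a path
    `π` from `x` to `y` in its propagation graph whose string `Π′` satisfies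
    `Π′A → ⟨F⟩A ∈ (P ∪ I(P))*` (so a propagation rule of `LabPr(P)` applies).
    Then there is a path `σ` from `x` to `y` in the propagation graph of the
    sequent with `R_{⟨G⟩} u v` removed whose string `Σ` satisfies
    `ΣA → ⟨F⟩A ∈ (P ∪ I(P))*`; consequently, the propagation rule followed by
    the structural rule (Path) for `G` may be replaced by (Path) followed by a
    propagation rule, deriving the same end sequent. -/
theorem permute_prop_and_path (P : Set PathAx) (Gax : PathAx) (hG : Gax ∈ P)
    (R : RelSet) (Γ : Multiset (Label × Formula)) (u v x y : Label)
    (ls : List Label) (A : Formula) (f : Dmd) (Pi' : List Dmd)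
    (hchain : IsChainList Gax.ant u v ls)
    (hpath : LPath (R ∪ (chainAtoms Gax.ant ls).toFinset ∪ {relAtom Gax.suc u v})
              x y Pi')
    (hstar : PStar P ⟨Pi', f⟩) :
    -- the new path σ after removing R_{⟨G⟩} u v
    (∃ Sig : List Dmd,
      LPath (R ∪ (chainAtoms Gax.ant ls).toFinset) x y Sig ∧ PStar P ⟨Sig, f⟩) ∧
    -- consequently: (Path) applies first ...
    LabSt (pathToGen '' P)
      (R ∪ (chainAtoms Gax.ant ls).toFinset ∪ {relAtom Gax.suc u v},
        (x, dmdF f A) ::ₘ (y, A) ::ₘ Γ)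
      (R ∪ (chainAtoms Gax.ant ls).toFinset,
        (x, dmdF f A) ::ₘ (y, A) ::ₘ Γ) ∧
    -- ... followed by a propagation rule of LabPr(P), deriving the same end sequent
    LabPr P
      (R ∪ (chainAtoms Gax.ant ls).toFinset, (x, dmdF f A) ::ₘ (y, A) ::ₘ Γ)
      (R ∪ (chainAtoms Gax.ant ls).toFinset, (x, dmdF f A) ::ₘ Γ) := by
  obtain ⟨hlen, hh, hl⟩ := hchain
  have hant : LPath (R ∪ (chainAtoms Gax.ant ls).toFinset) u v Gax.ant := by
    refine chain_lpath Gax.ant ls u v hlen hh hl ?_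
    intro p hp
    exact Finset.mem_union_right _ (List.mem_toFinset.mpr hp)
  obtain ⟨Sig, hr, hpSig⟩ := path_replace hant hpath
  have hSigStar : PStar P ⟨Sig, f⟩ := by
    simpa using repl_pstar hG hr [] f (by simpa using hstar)
  refine ⟨⟨Sig, hpSig, hSigStar⟩, ?_, ?_⟩
  · refine ⟨pathToGen Gax, ⟨Gax, hG, rfl⟩, R, (x, dmdF f A) ::ₘ (y, A) ::ₘ Γ,
      u, v, ls, [u, v], ⟨hlen, hh, hl⟩, ?_, rfl, ?_, ?_⟩
    · exact ⟨by simp [pathToGen], by simp, by simp⟩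
    · have : (chainAtoms (pathToGen Gax).suc [u, v]).toFinset
          = {relAtom Gax.suc u v} := by
        simp [pathToGen, chainAtoms]
      rw [this]; rfl
    · intro z hz hzu hzv
      simp at hz
      rcases hz with rfl | rfl
      · exact absurd rfl hzu
      · exact absurd rfl hzv
  · exact ⟨R ∪ (chainAtoms Gax.ant ls).toFinset, Γ, x, y, A, f, Sig,
      rfl, rfl, hpSig, hSigStar⟩
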